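/- For every n ≥ 0, the advantage of transmitting, Q¹_{n+1}(Δ) − Q⁰_{n+1}(Δ) = β + α(1−p)·(E_n(1) − E_n(Δ+1)), is nonincreasing in the age: for all integers 1 ≤ Δ₁ ≤ Δ₂, Q¹_{n+1}(Δ₂) − Q⁰_{n+1}(Δ₂) ≤ Q¹_{n+1}(Δ₁) − Q⁰_{n+1}(Δ₁). -/

import Mathlib

/-- Value-iteration functions for the discounted age-plus-energy MDP with
age-dependent distortion requirement. `VI M P p α β D n Δ Λ` is `V_n(Δ, Λ)`. -/
noncomputable def VI (M : ℕ) (P : ℕ → ℝ) (p α β : ℝ) (D : ℕ → ℕ) :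
    ℕ → ℕ → ℕ → ℝ
  | 0 => fun _ _ => 0
  | n + 1 => fun Δ Λ =>
      let En : ℕ → ℝ := fun d => ∑ l ∈ Finset.range (M + 1), P l * VI M P p α β D n d l
      let Q0 : ℝ := (Δ : ℝ) + α * En (Δ + 1)
      let Q1 : ℝ := (Δ : ℝ) + β + α * (p * En (Δ + 1) + (1 - p) * En 1)
      if D Δ ≤ Λ then min Q0 Q1 else Q0

/-- `EnVI M P p α β D n Δ = E_n(Δ) = Σ_{Λ'=0}^{M} P(Λ')·V_n(Δ, Λ')`. -/
noncomputable def EnVI (M : ℕ) (P : ℕ → ℝ) (p α β : ℝ) (D : ℕ → ℕ) (n Δ : ℕ) : ℝ :=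
  ∑ l ∈ Finset.range (M + 1), P l * VI M P p α β D n Δ l

/-- `Qzero M P p α β D n Δ = Q⁰_{n+1}(Δ)`, the no-transmission cost-to-go. -/
noncomputable def Qzero (M : ℕ) (P : ℕ → ℝ) (p α β : ℝ) (D : ℕ → ℕ) (n Δ : ℕ) : ℝ :=
  (Δ : ℝ) + α * EnVI M P p α β D n (Δ + 1)

/-- `Qone M P p α β D n Δ = Q¹_{n+1}(Δ)`, the transmission cost-to-go. -/
noncomputable def Qone (M : ℕ) (P : ℕ → ℝ) (p α β : ℝ) (D : ℕ → ℕ) (n Δ : ℕ) : ℝ :=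
  (Δ : ℝ) + β + α * (p * EnVI M P p α β D n (Δ + 1) + (1 - p) * EnVI M P p α β D n 1)

/-!
Since `E_n(1)` does not depend on `Δ`, the advantage `Q¹_{n+1}(Δ) − Q⁰_{n+1}(Δ)` is
`β + α(1−p)(E_n(1) − E_n(Δ+1))`, so it is nonincreasing as soon as `E_n` is nondecreasing.
That holds because every `V_n(·, Λ)` is nondecreasing, by induction on `n`: both `Q⁰_{n+1}` and
`Q¹_{n+1}` are built monotonically from `E_n`, and since `D` is nondecreasing, a larger age
leaves fewer energy levels at which the cheaper of the two may be chosen.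
-/

section ValueIteration

variable {M : ℕ} {P : ℕ → ℝ} {p α β : ℝ} {D : ℕ → ℕ}

theorem VI_succ (n Δ Λ : ℕ) :
    VI M P p α β D (n + 1) Δ Λ =
      if D Δ ≤ Λ then min (Qzero M P p α β D n Δ) (Qone M P p α β D n Δ)
      else Qzero M P p α β D n Δ :=
  rfl

theorem Qone_sub_Qzero (n Δ : ℕ) :
    Qone M P p α β D n Δ - Qzero M P p α β D n Δ =
      β + α * (1 - p) * (EnVI M P p α β D n 1 - EnVI M P p α β D n (Δ + 1)) := by
  unfold Qone Qzero
  ring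

theorem EnVI_mono (hP : ∀ l, 0 ≤ P l) {n : ℕ} (hV : Monotone (VI M P p α β D n)) :
    Monotone (EnVI M P p α β D n) := fun _ _ h =>
  Finset.sum_le_sum fun l _ => mul_le_mul_of_nonneg_left (hV h l) (hP l)

theorem Qzero_mono (hα : 0 ≤ α) {n : ℕ} (hE : Monotone (EnVI M P p α β D n)) :
    Monotone (Qzero M P p α β D n) := fun _ _ h => by
  unfold Qzero
  gcongr
  exact hE (Nat.succ_le_succ h)

theorem Qone_mono (hp : 0 ≤ p) (hα : 0 ≤ α) {n : ℕ} (hE : Monotone (EnVI M P p α β D n)) :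
    Monotone (Qone M P p α β D n) := fun _ _ h => by
  unfold Qone
  gcongr
  exact hE (Nat.succ_le_succ h)

theorem VI_mono (hP : ∀ l, 0 ≤ P l) (hp : 0 ≤ p) (hα : 0 ≤ α) (hD : Monotone D) :
    ∀ n, Monotone (VI M P p α β D n)
  | 0 => monotone_const
  | n + 1 => by
    intro Δ₁ Δ₂ h Λ
    have hE := EnVI_mono hP (VI_mono hP hp hα hD n)
    have hQ0 := Qzero_mono hα hE h
    have hQ1 := Qone_mono hp hα hE h
    simp only [VI_succ]
    split_ifs with h₁ h₂ h₂
    · exact min_le_min hQ0 hQ1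
    · exact (min_le_left _ _).trans hQ0
    · exact absurd ((hD h).trans h₂) h₁
    · exact hQ0

end ValueIteration

theorem advantage_formula_and_antitone (M : ℕ) (P : ℕ → ℝ) (p α β : ℝ) (D : ℕ → ℕ)
    (hP : ∀ l, 0 ≤ P l)
    (hp0 : 0 ≤ p) (hp1 : p ≤ 1) (hα0 : 0 < α)
    (hD : Monotone D) :
    ∀ n : ℕ,
      (∀ Δ : ℕ, 1 ≤ Δ →
        Qone M P p α β D n Δ - Qzero M P p α β D n Δ =
          β + α * (1 - p) * (EnVI M P p α β D n 1 - EnVI M P p α β D n (Δ + 1))) ∧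
      (∀ Δ₁ Δ₂ : ℕ, 1 ≤ Δ₁ → Δ₁ ≤ Δ₂ →
        Qone M P p α β D n Δ₂ - Qzero M P p α β D n Δ₂ ≤
          Qone M P p α β D n Δ₁ - Qzero M P p α β D n Δ₁) := by
  intro n
  refine ⟨fun Δ _ => Qone_sub_Qzero n Δ, fun Δ₁ Δ₂ _ h => ?_⟩
  have hE : EnVI M P p α β D n (Δ₁ + 1) ≤ EnVI M P p α β D n (Δ₂ + 1) :=
    EnVI_mono hP (VI_mono hP hp0 hα0.le hD n) (Nat.succ_le_succ h)
  have hweight : 0 ≤ α * (1 - p) := mul_nonneg hα0.le (sub_nonneg.2 hp1)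
  rw [Qone_sub_Qzero, Qone_sub_Qzero]
  gcongr
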